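/- Estimate (a) of the asymptotic Kepler lemma: for all masses m₁, m₂, m₃ > 0, every h > 0 and every j ≥ 0, there exist ρ₀ > 0 and c > 0 such that for every collision-free solution of the three-body problem with total energy H = −h and total angular momentum ‖J‖ ≤ j, and for every time t at which ρ(t) ≥ ρ₀ and the pair (1,2) realizes the minimal intermass distance, one has ‖J₁₂(t)‖ ≤ c, where J₁₂ = α₁ ζ × ζ̇. -/

import Mathlib

/-!
Since `(1,2)` is the closest pair, the potential is at most `M / r` with
`M = m₁m₂ + m₁m₃ + m₂m₃` and `r = ‖ζ‖`. As the energy `−h` is negative, the potential is at least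
`h`, so `r ≤ M / h`; and the kinetic energy, which dominates `α₁‖ζ̇‖² / 2`, is at most `M / r`.
Hence `‖J₁₂‖² ≤ α₁² r² ‖ζ̇‖² ≤ 2 α₁ M r ≤ 2 α₁ M² / h`.
-/

noncomputable def cross3 (a b : EuclideanSpace ℝ (Fin 3)) : EuclideanSpace ℝ (Fin 3) :=
  WithLp.toLp 2 ![a 1 * b 2 - a 2 * b 1, a 2 * b 0 - a 0 * b 2, a 0 * b 1 - a 1 * b 0]

lemma norm_cross3_le (a b : EuclideanSpace ℝ (Fin 3)) : ‖cross3 a b‖ ≤ ‖a‖ * ‖b‖ := by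
  have norm_eq (u : EuclideanSpace ℝ (Fin 3)) : ‖u‖ = √(u 0 ^ 2 + u 1 ^ 2 + u 2 ^ 2) := by
    simp [EuclideanSpace.norm_eq, Fin.sum_univ_three, sq_abs]
  rw [norm_eq, norm_eq, norm_eq, ← Real.sqrt_mul (by positivity)]
  apply Real.sqrt_le_sqrt
  change (a 1 * b 2 - a 2 * b 1) ^ 2 + (a 2 * b 0 - a 0 * b 2) ^ 2 + (a 0 * b 1 - a 1 * b 0) ^ 2
    ≤ _
  -- Lagrange's identity: the gap is the squared inner product of `a` and `b`.
  nlinarith [sq_nonneg (a 0 * b 0 + a 1 * b 1 + a 2 * b 2)]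

lemma reduced_mass_mul_norm_sub_sq_le {E : Type*} [SeminormedAddGroup E] {m₁ m₂ : ℝ}
    (hm₁ : 0 < m₁) (hm₂ : 0 < m₂) (v₁ v₂ : E) :
    m₁ * m₂ / (m₁ + m₂) * ‖v₁ - v₂‖ ^ 2 ≤ m₁ * ‖v₁‖ ^ 2 + m₂ * ‖v₂‖ ^ 2 := by
  have hsub : ‖v₁ - v₂‖ ^ 2 ≤ (‖v₁‖ + ‖v₂‖) ^ 2 := by gcongr; exact norm_sub_le v₁ v₂
  rw [div_mul_eq_mul_div, div_le_iff₀ (by positivity)]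
  nlinarith [sq_nonneg (m₁ * ‖v₁‖ - m₂ * ‖v₂‖), mul_pos hm₁ hm₂]

lemma three_body_potential_le_of_min_dist {m₁ m₂ m₃ r₁₂ r₁₃ r₂₃ : ℝ} (hm₁ : 0 ≤ m₁)
    (hm₂ : 0 ≤ m₂) (hm₃ : 0 ≤ m₃) (hr : 0 < r₁₂) (h₁₃ : r₁₂ ≤ r₁₃) (h₂₃ : r₁₂ ≤ r₂₃) :
    m₁ * m₂ / r₁₂ + m₁ * m₃ / r₁₃ + m₂ * m₃ / r₂₃ ≤ (m₁ * m₂ + m₁ * m₃ + m₂ * m₃) / r₁₂ := by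
  have : m₁ * m₃ / r₁₃ ≤ m₁ * m₃ / r₁₂ := by gcongr
  have : m₂ * m₃ / r₂₃ ≤ m₂ * m₃ / r₁₂ := by gcongr
  rw [add_div, add_div]
  linarith

lemma dist_and_kinetic_bounds_of_energy {m₁ m₂ m₃ a b c U h M r : ℝ} (hm₁ : 0 ≤ m₁)
    (hm₂ : 0 ≤ m₂) (hm₃ : 0 ≤ m₃) (hh : 0 ≤ h) (hr : 0 < r)
    (hE : (1 / 2) * (m₁ * a ^ 2 + m₂ * b ^ 2 + m₃ * c ^ 2) - U = -h) (hU : U ≤ M / r) :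
    h * r ≤ M ∧ r * (m₁ * a ^ 2 + m₂ * b ^ 2) ≤ 2 * M := by
  have hUr : U * r ≤ M := (le_div_iff₀ hr).mp hU
  have ha := mul_nonneg hm₁ (sq_nonneg a)
  have hb := mul_nonneg hm₂ (sq_nonneg b)
  have hc := mul_nonneg hm₃ (sq_nonneg c)
  have hhU : h ≤ U := by linarith
  constructor
  · nlinarith
  · nlinarith

lemma norm_pair_angular_momentum_sq_le {m₁ m₂ h M : ℝ} (hm₁ : 0 < m₁) (hm₂ : 0 < m₂)
    (hh : 0 < h) (x₁ x₂ v₁ v₂ : EuclideanSpace ℝ (Fin 3)) (hdist : h * ‖x₁ - x₂‖ ≤ M)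
    (hkin : ‖x₁ - x₂‖ * (m₁ * ‖v₁‖ ^ 2 + m₂ * ‖v₂‖ ^ 2) ≤ 2 * M) :
    ‖(m₁ * m₂ / (m₁ + m₂)) • cross3 (x₁ - x₂) (v₁ - v₂)‖ ^ 2
      ≤ 2 * (m₁ * m₂ / (m₁ + m₂)) * M ^ 2 / h := by
  set α := m₁ * m₂ / (m₁ + m₂)
  set r := ‖x₁ - x₂‖
  have hα : 0 < α := by positivity
  have hM : 0 ≤ M := le_trans (by positivity) hdist
  have hcross : ‖cross3 (x₁ - x₂) (v₁ - v₂)‖ ^ 2 ≤ r ^ 2 * ‖v₁ - v₂‖ ^ 2 := by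
    rw [← mul_pow]; gcongr; exact norm_cross3_le _ _
  have hrel := reduced_mass_mul_norm_sub_sq_le hm₁ hm₂ v₁ v₂
  rw [le_div_iff₀ hh, norm_smul, Real.norm_eq_abs, abs_of_pos hα]
  calc (α * ‖cross3 (x₁ - x₂) (v₁ - v₂)‖) ^ 2 * h
      ≤ α * r * (h * r) * (α * ‖v₁ - v₂‖ ^ 2) := by
        rw [mul_pow]; nlinarith [mul_pos (pow_pos hα 2) hh]
    _ ≤ α * r * M * (m₁ * ‖v₁‖ ^ 2 + m₂ * ‖v₂‖ ^ 2) := by gcongr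
    _ = α * M * (r * (m₁ * ‖v₁‖ ^ 2 + m₂ * ‖v₂‖ ^ 2)) := by ring
    _ ≤ α * M * (2 * M) := by gcongr
    _ = 2 * α * M ^ 2 := by ring

theorem asymptotic_kepler_estimate_a_general
    (m₁ m₂ m₃ h j : ℝ) (hm₁ : 0 < m₁) (hm₂ : 0 < m₂) (hm₃ : 0 < m₃)
    (hh : 0 < h) :
    ∃ ρ₀ > (0:ℝ), ∃ c > (0:ℝ), ∀
      (I : Set ℝ) (hI : IsOpen I)
      (x₁ x₂ x₃ v₁ v₂ v₃ : ℝ → EuclideanSpace ℝ (Fin 3))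
    -- collision-free on I
      (hsep : ∀ t ∈ I, x₁ t ≠ x₂ t ∧ x₁ t ≠ x₃ t ∧ x₂ t ≠ x₃ t)
    -- velocities are the derivatives of the positions
      (hx₁ : ∀ t ∈ I, HasDerivAt x₁ (v₁ t) t)
      (hx₂ : ∀ t ∈ I, HasDerivAt x₂ (v₂ t) t)
      (hx₃ : ∀ t ∈ I, HasDerivAt x₃ (v₃ t) t)
    -- Newton's equations
      (hN₁ : ∀ t ∈ I, HasDerivAt v₁
      ((m₂ / ‖x₂ t - x₁ t‖ ^ 3) • (x₂ t - x₁ t) +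
       (m₃ / ‖x₃ t - x₁ t‖ ^ 3) • (x₃ t - x₁ t)) t)
      (hN₂ : ∀ t ∈ I, HasDerivAt v₂
      ((m₁ / ‖x₁ t - x₂ t‖ ^ 3) • (x₁ t - x₂ t) +
       (m₃ / ‖x₃ t - x₂ t‖ ^ 3) • (x₃ t - x₂ t)) t)
      (hN₃ : ∀ t ∈ I, HasDerivAt v₃
      ((m₁ / ‖x₁ t - x₃ t‖ ^ 3) • (x₁ t - x₃ t) +
       (m₂ / ‖x₂ t - x₃ t‖ ^ 3) • (x₂ t - x₃ t)) t)
    -- total energy equal to −h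
      (hH : ∀ t ∈ I,
      (1 / 2) * (m₁ * ‖v₁ t‖ ^ 2 + m₂ * ‖v₂ t‖ ^ 2 + m₃ * ‖v₃ t‖ ^ 2) -
        (m₁ * m₂ / ‖x₁ t - x₂ t‖ + m₁ * m₃ / ‖x₁ t - x₃ t‖ +
         m₂ * m₃ / ‖x₂ t - x₃ t‖) = -h)
    -- total angular momentum of norm at most j
      (hJ : ∀ t ∈ I,
      ‖m₁ • cross3 (x₁ t) (v₁ t) + m₂ • cross3 (x₂ t) (v₂ t) +
        m₃ • cross3 (x₃ t) (v₃ t)‖ ≤ j),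
      ∀ t ∈ I,
        ρ₀ ≤ ‖x₃ t - (m₁ + m₂)⁻¹ • (m₁ • x₁ t + m₂ • x₂ t)‖ →
        (‖x₁ t - x₂ t‖ ≤ ‖x₁ t - x₃ t‖ ∧ ‖x₁ t - x₂ t‖ ≤ ‖x₂ t - x₃ t‖) →
        ‖(m₁ * m₂ / (m₁ + m₂)) • cross3 (x₁ t - x₂ t) (v₁ t - v₂ t)‖ ≤ c := by
  set M := m₁ * m₂ + m₁ * m₃ + m₂ * m₃
  refine ⟨1, one_pos, √(2 * (m₁ * m₂ / (m₁ + m₂)) * M ^ 2 / h), by positivity, ?_⟩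
  intro I _ x₁ x₂ x₃ v₁ v₂ v₃ hsep _ _ _ _ _ _ hH _ t ht _ ⟨h₁₃, h₂₃⟩
  have hr : 0 < ‖x₁ t - x₂ t‖ := norm_sub_pos_iff.mpr (hsep t ht).1
  have hU := three_body_potential_le_of_min_dist hm₁.le hm₂.le hm₃.le hr h₁₃ h₂₃
  obtain ⟨hdist, hkin⟩ := dist_and_kinetic_bounds_of_energy hm₁.le hm₂.le hm₃.le hh.le hr
    (hH t ht) hU
  rw [Real.le_sqrt (norm_nonneg _) (by positivity)]
  exact norm_pair_angular_momentum_sq_le hm₁ hm₂ hh _ _ _ _ hdist hkin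

/-- **Estimate (a) of the asymptotic Kepler lemma.** For masses `m_i > 0`, `h > 0`, `j ≥ 0`
there exist `ρ₀, c > 0` such that along any collision-free solution with energy `−h` and
angular momentum of norm `≤ j`, at any time where `ρ ≥ ρ₀` and the pair `(1,2)` realizes
the minimal intermass distance, the pair angular momentum `J₁₂ = α₁ ζ × ζ̇` has norm `≤ c`. -/
theorem asymptotic_kepler_estimate_a
    (m₁ m₂ m₃ h j : ℝ) (hm₁ : 0 < m₁) (hm₂ : 0 < m₂) (hm₃ : 0 < m₃)
    (hh : 0 < h) (hj : 0 ≤ j) :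
    ∃ ρ₀ > (0:ℝ), ∃ c > (0:ℝ), ∀
      (I : Set ℝ) (hI : IsOpen I)
      (x₁ x₂ x₃ v₁ v₂ v₃ : ℝ → EuclideanSpace ℝ (Fin 3))
    -- collision-free on I
      (hsep : ∀ t ∈ I, x₁ t ≠ x₂ t ∧ x₁ t ≠ x₃ t ∧ x₂ t ≠ x₃ t)
    -- velocities are the derivatives of the positions
      (hx₁ : ∀ t ∈ I, HasDerivAt x₁ (v₁ t) t)
      (hx₂ : ∀ t ∈ I, HasDerivAt x₂ (v₂ t) t)
      (hx₃ : ∀ t ∈ I, HasDerivAt x₃ (v₃ t) t)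
    -- Newton's equations
      (hN₁ : ∀ t ∈ I, HasDerivAt v₁
      ((m₂ / ‖x₂ t - x₁ t‖ ^ 3) • (x₂ t - x₁ t) +
       (m₃ / ‖x₃ t - x₁ t‖ ^ 3) • (x₃ t - x₁ t)) t)
      (hN₂ : ∀ t ∈ I, HasDerivAt v₂
      ((m₁ / ‖x₁ t - x₂ t‖ ^ 3) • (x₁ t - x₂ t) +
       (m₃ / ‖x₃ t - x₂ t‖ ^ 3) • (x₃ t - x₂ t)) t)
      (hN₃ : ∀ t ∈ I, HasDerivAt v₃
      ((m₁ / ‖x₁ t - x₃ t‖ ^ 3) • (x₁ t - x₃ t) +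
       (m₂ / ‖x₂ t - x₃ t‖ ^ 3) • (x₂ t - x₃ t)) t)
    -- total energy equal to −h
      (hH : ∀ t ∈ I,
      (1 / 2) * (m₁ * ‖v₁ t‖ ^ 2 + m₂ * ‖v₂ t‖ ^ 2 + m₃ * ‖v₃ t‖ ^ 2) -
        (m₁ * m₂ / ‖x₁ t - x₂ t‖ + m₁ * m₃ / ‖x₁ t - x₃ t‖ +
         m₂ * m₃ / ‖x₂ t - x₃ t‖) = -h)
    -- total angular momentum of norm at most j
      (hJ : ∀ t ∈ I,
      ‖m₁ • cross3 (x₁ t) (v₁ t) + m₂ • cross3 (x₂ t) (v₂ t) +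
        m₃ • cross3 (x₃ t) (v₃ t)‖ ≤ j),
      ∀ t ∈ I,
        ρ₀ ≤ ‖x₃ t - (m₁ + m₂)⁻¹ • (m₁ • x₁ t + m₂ • x₂ t)‖ →
        (‖x₁ t - x₂ t‖ ≤ ‖x₁ t - x₃ t‖ ∧ ‖x₁ t - x₂ t‖ ≤ ‖x₂ t - x₃ t‖) →
        ‖(m₁ * m₂ / (m₁ + m₂)) • cross3 (x₁ t - x₂ t) (v₁ t - v₂ t)‖ ≤ c :=
  asymptotic_kepler_estimate_a_general m₁ m₂ m₃ h j hm₁ hm₂ hm₃ hh
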